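/- Theorem 2.2, first part: Suppose the kernel k is homogeneous of degree β−1 for some β>0, i.e., k(t,ts)=t^{β−1}k(1,s) for all t>0 and s∈(0,1), and that k(1,·)∈L^{1+ε}((0,1)) for some ε>0. Then k satisfies Assumption (K) and the continuity assumption (for a.e. s∈(0,1) the map t↦k(t,ts) is continuous on (0,∞)); moreover c_n(t)=ĉ_n t^{nβ} for all n∈ℕ and t≥0, where ĉ_0=1 and ĉ_n=ĉ_{n−1}∫_0^1 k(1,s)s^{β(n−1)}ds for n≥1; consequently Φ(t,λ)=Φ̂(λt^β) for all t≥0 and λ∈ℂ, where Φ̂(λ):=∑_{n=0}^∞ ĉ_n λ^n. -/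

import Mathlib

open MeasureTheory Filter

noncomputable section

def AssumptionK (k : ℝ → ℝ → ℝ) : Prop :=
  Measurable (Function.uncurry k) ∧
  ∃ α ε : ℝ, 0 ≤ α ∧ α < 1 ∧ 0 < ε ∧
    ∀ T : ℝ, 0 < T → ∃ KT : ℝ,
      ∀ t : ℝ, 0 < t → t ≤ T →
        MeasureTheory.IntegrableOn (fun s => |k t s| ^ (1 + ε)) (Set.Ioc 0 t) ∧
        t ^ (α - 1 / (1 + ε)) *
          (∫ s in Set.Ioc (0:ℝ) t, |k t s| ^ (1 + ε)) ^ (1 / (1 + ε)) ≤ KT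

noncomputable def coeff (k : ℝ → ℝ → ℝ) : ℕ → ℝ → ℝ
  | 0, _ => 1
  | n + 1, t => if 0 < t then ∫ s in Set.Ioc (0:ℝ) t, k t s * coeff k n s else 0

noncomputable def Phi (k : ℝ → ℝ → ℝ) (t : ℝ) (l : ℂ) : ℂ :=
  ∑' n : ℕ, (coeff k n t : ℂ) * l ^ n

noncomputable def PhiR (k : ℝ → ℝ → ℝ) (t : ℝ) (x : ℝ) : ℝ :=
  ∑' n : ℕ, coeff k n t * x ^ n

noncomputable def chat (k : ℝ → ℝ → ℝ) (β : ℝ) : ℕ → ℝ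
  | 0 => 1
  | n + 1 => chat k β n * ∫ s in Set.Ioc (0:ℝ) 1, k 1 s * s ^ (β * (n : ℝ))

noncomputable def PhiHatC (k : ℝ → ℝ → ℝ) (β : ℝ) (z : ℂ) : ℂ :=
  ∑' n : ℕ, (chat k β n : ℂ) * z ^ n

noncomputable def PhiHatR (k : ℝ → ℝ → ℝ) (β : ℝ) (x : ℝ) : ℝ :=
  ∑' n : ℕ, chat k β n * x ^ n

/-!
Substituting `s = t u`, homogeneity turns every integral `∫₀ᵗ F (k t s) s ds` into
`t ∫₀¹ F (t^(β-1) k 1 u) (t u) du`. For `F = |·|^(1+ε)` this gives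
`∫₀ᵗ |k t s|^(1+ε) ds = t^((β-1)(1+ε)+1) ∫₀¹ |k 1 u|^(1+ε) du`, so the weighted norm in
Assumption (K) equals `t^(α+β-1)` times a constant and is bounded on `(0, T]` once
`α = max (1 - β) 0`. For `F x s = x s^(nβ)` it shows that the Volterra operator maps `t^(nβ)` to
`t^((n+1)β) ∫₀¹ k 1 u u^(nβ) du`, which is exactly the recursion defining `chat`.
-/

open Set

lemma setIntegral_Ioc_zero_eq_mul (f : ℝ → ℝ) {t : ℝ} (ht : 0 < t) :
    ∫ s in Ioc 0 t, f s = t * ∫ u in Ioc 0 1, f (t * u) := by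
  rw [← intervalIntegral.integral_of_le ht.le, ← intervalIntegral.integral_of_le zero_le_one,
    intervalIntegral.integral_comp_mul_left f ht.ne', mul_zero, mul_one, smul_eq_mul,
    mul_inv_cancel_left₀ ht.ne']

lemma IntegrableOn.of_comp_mul_left_Ioc {f : ℝ → ℝ} {t : ℝ} (ht : 0 < t)
    (hf : IntegrableOn (fun u => f (t * u)) (Ioc 0 1)) : IntegrableOn f (Ioc 0 t) := by
  rw [← intervalIntegrable_iff_integrableOn_Ioc_of_le ht.le,
    ← IntervalIntegrable.comp_mul_left_iff ht.ne', zero_div, div_self ht.ne']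
  exact (intervalIntegrable_iff_integrableOn_Ioc_of_le zero_le_one).mpr hf

def IsHomogeneousKernel (k : ℝ → ℝ → ℝ) (β : ℝ) : Prop :=
  ∀ t : ℝ, 0 < t → ∀ s ∈ Ioo (0:ℝ) 1, k t (t * s) = t ^ (β - 1) * k 1 s

namespace IsHomogeneousKernel

variable {k : ℝ → ℝ → ℝ} {β t : ℝ}

lemma continuousOn_apply_mul (hk : IsHomogeneousKernel k β) {s : ℝ} (hs : s ∈ Ioo (0:ℝ) 1) :
    ContinuousOn (fun t => k t (t * s)) (Ioi 0) := by
  refine ContinuousOn.congr ?_ fun t ht => hk t ht s hs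
  exact (continuousOn_id.rpow_const fun x hx => Or.inl (ne_of_gt hx)).mul continuousOn_const

lemma setIntegral_Ioc_comp (hk : IsHomogeneousKernel k β) (G : ℝ → ℝ → ℝ) (ht : 0 < t) :
    ∫ s in Ioc 0 t, G (k t s) s = t * ∫ u in Ioc 0 1, G (t ^ (β - 1) * k 1 u) (t * u) := by
  rw [setIntegral_Ioc_zero_eq_mul _ ht, integral_Ioc_eq_integral_Ioo,
    integral_Ioc_eq_integral_Ioo]
  congr 1
  exact setIntegral_congr_fun measurableSet_Ioo fun u hu => by simp only [hk t ht u hu]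

lemma integrableOn_Ioc_comp (hk : IsHomogeneousKernel k β) (G : ℝ → ℝ → ℝ) (ht : 0 < t)
    (hG : IntegrableOn (fun u => G (t ^ (β - 1) * k 1 u) (t * u)) (Ioc 0 1)) :
    IntegrableOn (fun s => G (k t s) s) (Ioc 0 t) := by
  refine IntegrableOn.of_comp_mul_left_Ioc ht ?_
  rw [integrableOn_Ioc_iff_integrableOn_Ioo] at hG ⊢
  exact hG.congr_fun (fun u hu => by simp only [hk t ht u hu]) measurableSet_Ioo

lemma setIntegral_abs_rpow (hk : IsHomogeneousKernel k β) (q : ℝ) (ht : 0 < t) :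
    ∫ s in Ioc 0 t, |k t s| ^ q = t ^ ((β - 1) * q + 1) * ∫ u in Ioc 0 1, |k 1 u| ^ q := by
  have hsplit : ∀ u, |t ^ (β - 1) * k 1 u| ^ q = t ^ ((β - 1) * q) * |k 1 u| ^ q := fun u => by
    rw [abs_mul, abs_of_pos (Real.rpow_pos_of_pos ht _),
      Real.mul_rpow (Real.rpow_nonneg ht.le _) (abs_nonneg _), ← Real.rpow_mul ht.le]
  rw [hk.setIntegral_Ioc_comp (fun x _ => |x| ^ q) ht]
  simp only [hsplit, integral_const_mul, Real.rpow_add ht, Real.rpow_one]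
  ring

lemma integrableOn_abs_rpow (hk : IsHomogeneousKernel k β) {q : ℝ} (ht : 0 < t)
    (hq : IntegrableOn (fun u => |k 1 u| ^ q) (Ioc 0 1)) :
    IntegrableOn (fun s => |k t s| ^ q) (Ioc 0 t) := by
  refine hk.integrableOn_Ioc_comp (fun x _ => |x| ^ q) ht ?_
  refine IntegrableOn.congr_fun (hq.const_mul ((t ^ (β - 1)) ^ q)) (fun u _ => ?_) measurableSet_Ioc
  rw [abs_mul, abs_of_pos (Real.rpow_pos_of_pos ht _),
    Real.mul_rpow (Real.rpow_nonneg ht.le _) (abs_nonneg _)]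

lemma setIntegral_mul_rpow (hk : IsHomogeneousKernel k β) (p : ℝ) (ht : 0 < t) :
    ∫ s in Ioc 0 t, k t s * s ^ p = t ^ (β + p) * ∫ u in Ioc 0 1, k 1 u * u ^ p := by
  have hscale : ∀ u ∈ Ioc (0:ℝ) 1,
      t ^ (β - 1) * k 1 u * (t * u) ^ p = t ^ (β - 1) * t ^ p * (k 1 u * u ^ p) := fun u hu => by
    rw [Real.mul_rpow ht.le hu.1.le]; ring
  rw [hk.setIntegral_Ioc_comp (fun x s => x * s ^ p) ht,
    setIntegral_congr_fun measurableSet_Ioc hscale, integral_const_mul,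
    Real.rpow_add ht, Real.rpow_sub_one ht.ne']
  field_simp

end IsHomogeneousKernel

lemma coeff_succ_of_pos (k : ℝ → ℝ → ℝ) (n : ℕ) {t : ℝ} (ht : 0 < t) :
    coeff k (n + 1) t = ∫ s in Ioc 0 t, k t s * coeff k n s :=
  if_pos ht

lemma coeff_succ_zero (k : ℝ → ℝ → ℝ) (n : ℕ) : coeff k (n + 1) 0 = 0 :=
  if_neg (lt_irrefl 0)

lemma IsHomogeneousKernel.coeff_eq_chat_mul_rpow {k : ℝ → ℝ → ℝ} {β : ℝ}
    (hk : IsHomogeneousKernel k β) (hβ : β ≠ 0) (n : ℕ) {t : ℝ} (ht : 0 ≤ t) :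
    coeff k n t = chat k β n * t ^ ((n : ℝ) * β) := by
  induction n generalizing t with
  | zero => simp [coeff, chat]
  | succ n ih =>
    rcases ht.eq_or_lt with rfl | ht
    · rw [coeff_succ_zero, Real.zero_rpow (mul_ne_zero (by positivity) hβ), mul_zero]
    calc coeff k (n + 1) t = ∫ s in Ioc 0 t, chat k β n * (k t s * s ^ ((n : ℝ) * β)) := by
          rw [coeff_succ_of_pos k n ht]
          exact setIntegral_congr_fun measurableSet_Ioc fun s hs => by rw [ih hs.1.le]; ring
      _ = chat k β n * (∫ u in Ioc 0 1, k 1 u * u ^ (β * n)) * t ^ (((n + 1 : ℕ) : ℝ) * β) := by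
          rw [integral_const_mul, hk.setIntegral_mul_rpow _ ht, mul_comm β]
          push_cast
          ring_nf
      _ = chat k β (n + 1) * t ^ (((n + 1 : ℕ) : ℝ) * β) := rfl

lemma IsHomogeneousKernel.assumptionK {k : ℝ → ℝ → ℝ} {β : ℝ} (hk : IsHomogeneousKernel k β)
    (hβ : 0 < β) (hkm : Measurable (Function.uncurry k)) {ε : ℝ} (hε : 0 < ε)
    (hkL : IntegrableOn (fun s => |k 1 s| ^ (1 + ε)) (Ioc 0 1)) : AssumptionK k := by
  set α := max (1 - β) 0
  set C := ∫ u in Ioc 0 1, |k 1 u| ^ (1 + ε)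
  have hα : 0 ≤ α + β - 1 := by linarith [le_max_left (1 - β) 0]
  refine ⟨hkm, α, ε, le_max_right _ _, max_lt (by linarith) one_pos, hε, fun T _ =>
    ⟨T ^ (α + β - 1) * C ^ (1 / (1 + ε)), fun t ht htT => ⟨hk.integrableOn_abs_rpow ht hkL, ?_⟩⟩⟩
  have hexp : α - 1 / (1 + ε) + ((β - 1) * (1 + ε) + 1) * (1 / (1 + ε)) = α + β - 1 := by
    field_simp
    ring
  rw [hk.setIntegral_abs_rpow _ ht, Real.mul_rpow (by positivity) (by positivity),
    ← Real.rpow_mul ht.le, ← mul_assoc, ← Real.rpow_add ht, hexp]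
  gcongr

lemma Phi_eq_PhiHatC_of_coeff_eq {k : ℝ → ℝ → ℝ} {β t : ℝ} (ht : 0 ≤ t)
    (h : ∀ n : ℕ, coeff k n t = chat k β n * t ^ ((n : ℝ) * β)) (l : ℂ) :
    Phi k t l = PhiHatC k β (l * ((t ^ β : ℝ) : ℂ)) := by
  refine tsum_congr fun n => ?_
  rw [h n, mul_comm (n : ℝ), Real.rpow_mul ht, Real.rpow_natCast]
  push_cast
  ring

theorem stmt8 (k : ℝ → ℝ → ℝ) (β : ℝ) (hβ : 0 < β)
    (hkm : Measurable (Function.uncurry k))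
    (hhom : ∀ t : ℝ, 0 < t → ∀ s ∈ Set.Ioo (0:ℝ) 1, k t (t * s) = t ^ (β - 1) * k 1 s)
    (ε : ℝ) (hε : 0 < ε)
    (hkL : MeasureTheory.IntegrableOn (fun s => |k 1 s| ^ (1 + ε)) (Set.Ioo 0 1)) :
    AssumptionK k ∧
    (∀ᵐ s ∂(MeasureTheory.volume.restrict (Set.Ioo (0:ℝ) 1)),
      ContinuousOn (fun t => k t (t * s)) (Set.Ioi 0)) ∧
    (∀ n : ℕ, ∀ t : ℝ, 0 ≤ t → coeff k n t = chat k β n * t ^ ((n : ℝ) * β)) ∧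
    (∀ t : ℝ, 0 ≤ t → ∀ l : ℂ, Phi k t l = PhiHatC k β (l * ((t ^ β : ℝ) : ℂ))) := by
  have hk : IsHomogeneousKernel k β := hhom
  have hcoeff (n : ℕ) (t : ℝ) (ht : 0 ≤ t) := hk.coeff_eq_chat_mul_rpow hβ.ne' n ht
  refine ⟨hk.assumptionK hβ hkm hε ((integrableOn_Ioc_iff_integrableOn_Ioo).mpr hkL), ?_, hcoeff,
    fun t ht => Phi_eq_PhiHatC_of_coeff_eq ht (hcoeff · t ht)⟩
  filter_upwards [ae_restrict_mem measurableSet_Ioo] with s hs using hk.continuousOn_apply_mul hs
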